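/- Let (H,R) be a quasi-triangular Hopf algebra over a field k, and let ZG(H) denote the set of central grouplike elements of H. Then there is a bijection between the set of isomorphism classes of one-dimensional Yetter-Drinfeld modules in _H^H YD and the set ZG(H) × {isomorphism classes of one-dimensional left H-modules}. Explicitly: every one-dimensional V = kv ∈ _H^H YD has H_R-coaction ρ_R(v) = g ⊗ v for a unique g ∈ ZG(H) and H-action given by an algebra map H → k; conversely every such pair (g, algebra map) arises from a one-dimensional Yetter-Drinfeld module, and two such modules are isomorphic iff their pairs coincide. -/

import Mathlib

open TensorProduct LinearMap

variable (K : Type) [Field K] (H : Type) [Ring H] [HopfAlgebra K H]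

/-- The left adjoint action as a linear map `H ⊗ H →ₗ H`, `h ⊗ a ↦ Σ h₍₁₎ * a * S(h₍₂₎)`. -/
noncomputable def adMap : H ⊗[K] H →ₗ[K] H :=
  (LinearMap.mul' K H) ∘ₗ
    (LinearMap.lTensor H ((LinearMap.mul' K H) ∘ₗ
      (LinearMap.lTensor H (HopfAlgebra.antipode (R := K))) ∘ₗ
      (TensorProduct.comm K H H).toLinearMap)) ∘ₗ
    (TensorProduct.assoc K H H H).toLinearMap ∘ₗ
    (LinearMap.rTensor H (Coalgebra.comul (R := K)))

/-- `h ·_ad a = Σ h₍₁₎ a S(h₍₂₎)`. -/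
noncomputable def adAct (h a : H) : H := adMap K H (h ⊗ₜ a)

/-- `R¹² = Σ r¹ ⊗ r² ⊗ 1` in `H ⊗ (H ⊗ H)`. -/
noncomputable def r12 (R : H ⊗[K] H) : H ⊗[K] (H ⊗[K] H) :=
  TensorProduct.map LinearMap.id ((TensorProduct.mk K H H).flip 1) R

/-- `R¹³ = Σ r¹ ⊗ 1 ⊗ r²` in `H ⊗ (H ⊗ H)`. -/
noncomputable def r13 (R : H ⊗[K] H) : H ⊗[K] (H ⊗[K] H) :=
  TensorProduct.map LinearMap.id (TensorProduct.mk K H H 1) R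

/-- `R²³ = 1 ⊗ R` in `H ⊗ (H ⊗ H)`. -/
noncomputable def r23 (R : H ⊗[K] H) : H ⊗[K] (H ⊗[K] H) := (1 : H) ⊗ₜ R

/-- `(H,R)` is a quasi-triangular Hopf algebra: `R` is invertible,
`R Δ(h) = Δᶜᵒᵖ(h) R`, `(Δ⊗id)(R) = R¹³R²³` and `(id⊗Δ)(R) = R¹³R¹²`. -/
structure IsQuasiTriangular (R : H ⊗[K] H) : Prop where
  isUnit : IsUnit R
  intertwine : ∀ h : H, R * Coalgebra.comul h =
    (TensorProduct.comm K H H) (Coalgebra.comul h) * R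
  comul_rTensor : (TensorProduct.assoc K H H H)
      ((LinearMap.rTensor H (Coalgebra.comul (R := K))) R) = r13 K H R * r23 K H R
  comul_lTensor : (LinearMap.lTensor H (Coalgebra.comul (R := K))) R = r13 K H R * r12 K H R

/-- The comultiplication `Δ_R` of the transmuted braided group `H_R`:
`Δ_R(h) = Σ h₍₁₎ S(R²) ⊗ R¹ ·_ad h₍₂₎`. -/
noncomputable def deltaR (R : H ⊗[K] H) : H →ₗ[K] H ⊗[K] H :=
  (TensorProduct.map
      ((LinearMap.mul' K H) ∘ₗ (LinearMap.lTensor H (HopfAlgebra.antipode (R := K))))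
      ((adMap K H) ∘ₗ (TensorProduct.comm K H H).toLinearMap)) ∘ₗ
    (TensorProduct.tensorTensorTensorComm K H H H H).toLinearMap ∘ₗ
    (LinearMap.lTensor (H ⊗[K] H) (TensorProduct.comm K H H).toLinearMap) ∘ₗ
    ((TensorProduct.mk K (H ⊗[K] H) (H ⊗[K] H)).flip R) ∘ₗ
    (Coalgebra.comul (R := K))

/-- `(h ⊗ h') ⊗ a ↦ h * a * S(h')`. -/
noncomputable def sandwich : (H ⊗[K] H) ⊗[K] H →ₗ[K] H :=
  (LinearMap.mul' K H) ∘ₗ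
    (LinearMap.lTensor H ((LinearMap.mul' K H) ∘ₗ
      (LinearMap.lTensor H (HopfAlgebra.antipode (R := K))) ∘ₗ
      (TensorProduct.comm K H H).toLinearMap)) ∘ₗ
    (TensorProduct.assoc K H H H).toLinearMap

/-- `h ↦ Σ (h₍₁₎ ⊗ h₍₃₎) ⊗ h₍₂₎`. -/
noncomputable def deltaYD : H →ₗ[K] (H ⊗[K] H) ⊗[K] H :=
  (TensorProduct.assoc K H H H).symm.toLinearMap ∘ₗ
    (LinearMap.lTensor H (TensorProduct.comm K H H).toLinearMap) ∘ₗ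
    (TensorProduct.assoc K H H H).toLinearMap ∘ₗ
    (LinearMap.rTensor H (Coalgebra.comul (R := K))) ∘ₗ
    (Coalgebra.comul (R := K))

/-- A left-left Yetter–Drinfeld module structure over `H` on the `K`-module `V`:
a left `H`-module structure (given by an algebra map `H → End V`), together with a
left `H`-comodule structure `ρ = coact`, satisfying the compatibility
`Σ (hv)₍₋₁₎ ⊗ (hv)₍₀₎ = Σ h₍₁₎ v₍₋₁₎ S(h₍₃₎) ⊗ h₍₂₎ v₍₀₎`. -/
structure YDStr (V : Type*) [AddCommGroup V] [Module K V] where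
  act : H →ₐ[K] Module.End K V
  coact : V →ₗ[K] H ⊗[K] V
  counit_coact : ∀ v : V,
    (TensorProduct.lid K V)
      ((LinearMap.rTensor V (Coalgebra.counit (R := K))) (coact v)) = v
  coassoc : (LinearMap.rTensor V (Coalgebra.comul (R := K))) ∘ₗ coact
      = (TensorProduct.assoc K H H V).symm.toLinearMap ∘ₗ
        (LinearMap.lTensor H coact) ∘ₗ coact
  yd : coact ∘ₗ (TensorProduct.lift act.toLinearMap)
      = (TensorProduct.map (sandwich K H) (TensorProduct.lift act.toLinearMap)) ∘ₗ
        (TensorProduct.tensorTensorTensorComm K (H ⊗[K] H) H H V).toLinearMap ∘ₗ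
        (TensorProduct.map (deltaYD K H) coact)

/-- A Yetter–Drinfeld module is irreducible if it is nonzero and has no nontrivial
subspace stable under the action and the coaction. -/
def YDIrreducible {V : Type*} [AddCommGroup V] [Module K V] (s : YDStr K H V) : Prop :=
  (⊥ : Submodule K V) ≠ ⊤ ∧
    ∀ W : Submodule K V, (∀ h : H, ∀ w ∈ W, s.act h w ∈ W) →
      (∀ w ∈ W, s.coact w ∈ Submodule.map₂ (TensorProduct.mk K H V) ⊤ W) →
      W = ⊥ ∨ W = ⊤

/-- An isomorphism of Yetter–Drinfeld modules. -/
def YDIsomorphic {V V' : Type*} [AddCommGroup V] [Module K V] [AddCommGroup V']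
    [Module K V'] (s : YDStr K H V) (s' : YDStr K H V') : Prop :=
  ∃ e : V ≃ₗ[K] V', (∀ (h : H) (v : V), e (s.act h v) = s'.act h (e v)) ∧
    (LinearMap.lTensor H e.toLinearMap) ∘ₗ s.coact = s'.coact ∘ₗ e.toLinearMap

/-- The `H_R`-comodule structure `ρ_R(v) = Σ v₍₋₁₎ S(R²) ⊗ R¹ v₍₀₎` associated with a
Yetter–Drinfeld module. -/
noncomputable def rhoR (R : H ⊗[K] H) {V : Type*} [AddCommGroup V] [Module K V]
    (s : YDStr K H V) : V →ₗ[K] H ⊗[K] V :=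
  (TensorProduct.map
      ((LinearMap.mul' K H) ∘ₗ (LinearMap.lTensor H (HopfAlgebra.antipode (R := K))))
      ((TensorProduct.lift s.act.toLinearMap) ∘ₗ (TensorProduct.comm K V H).toLinearMap)) ∘ₗ
    (TensorProduct.tensorTensorTensorComm K H V H H).toLinearMap ∘ₗ
    (LinearMap.lTensor (H ⊗[K] V) (TensorProduct.comm K H H).toLinearMap) ∘ₗ
    ((TensorProduct.mk K (H ⊗[K] V) (H ⊗[K] H)).flip R) ∘ₗ s.coact

/-- `g` is a central grouplike element of `H`. -/
def IsCentralGrouplike (g : H) : Prop :=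
  Coalgebra.comul (R := K) g = g ⊗ₜ g ∧ Coalgebra.counit (R := K) g = 1 ∧
    ∀ h : H, g * h = h * g

/-! A one-dimensional Yetter–Drinfeld module `kv` is given by a character `τ` (the action) and an
element `f` with `ρ(v) = f ⊗ v`; the comodule axioms make `f` grouplike, and in the convolution
algebra of `H` the Yetter–Drinfeld condition reads `(h ↦ Σ h₁ f τ(h₂) S(h₃)) = τ(·) f`, which after
convolving with `id` says that `f` intertwines the winding automorphisms of `τ`:
`(Σ h₁ τ(h₂)) f = f (Σ τ(h₁) h₂)`. Slicing `R` with `τ` gives `w = (τ ⊗ id)(R)`, which is grouplike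
by `(id ⊗ Δ)(R) = R¹³R¹²` and an intertwiner by `R Δ = Δᶜᵒᵖ R`. As the winding automorphisms are
bijective, `f` is an intertwiner iff `f S(w)` is central, and `ρ_R(v) = f S(w) ⊗ v`. So
`(f, τ) ↦ (f S(w), τ)` matches the data of one-dimensional Yetter–Drinfeld modules with pairs of a
central grouplike element and a character, and any linear isomorphism between two one-dimensional
modules with the same data is a Yetter–Drinfeld isomorphism. -/

open Coalgebra HopfAlgebra WithConv

noncomputable section

section Windings

variable {K H A : Type*} [CommSemiring K] [Semiring H] [Semiring A] [Algebra K A]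

def applyLeft [Algebra K H] (τ : H →ₐ[K] K) : H ⊗[K] A →ₐ[K] A :=
  (Algebra.TensorProduct.lid K A).toAlgHom.comp (Algebra.TensorProduct.map τ (AlgHom.id K A))

@[simp] lemma applyLeft_tmul [Algebra K H] (τ : H →ₐ[K] K) (x : H) (a : A) :
    applyLeft τ (x ⊗ₜ[K] a) = τ x • a := by
  simp [applyLeft]

variable [Bialgebra K H]

/-- `h ↦ Σ τ(h₁) h₂` -/
def leftWinding (τ : H →ₐ[K] K) : H →ₐ[K] H := (applyLeft τ).comp (Bialgebra.comulAlgHom K H)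

/-- `h ↦ Σ h₁ τ(h₂)` -/
def rightWinding (τ : H →ₐ[K] K) : H →ₐ[K] H :=
  (applyLeft τ).comp ((Algebra.TensorProduct.comm K H H).toAlgHom.comp (Bialgebra.comulAlgHom K H))

def IntertwinesWindings (τ : H →ₐ[K] K) (f : H) : Prop :=
  ∀ h, rightWinding τ h * f = f * leftWinding τ h

lemma applyLeft_lTensor_comul (τ : H →ₐ[K] K) (t : H ⊗[K] H) :
    applyLeft τ (lTensor H (comul (R := K)) t) = comul (R := K) (applyLeft τ t) := by
  have : (applyLeft τ).toLinearMap ∘ₗ lTensor H (comul (R := K)) =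
      comul ∘ₗ (applyLeft (A := H) τ).toLinearMap := by
    ext x y; simp
  exact LinearMap.congr_fun this t

def charConv (τ : H →ₐ[K] K) : WithConv (H →ₗ[K] H) :=
  toConv ((Algebra.ofId K H).comp τ).toLinearMap

lemma rightWinding_toLinearMap (τ : H →ₐ[K] K) :
    (rightWinding τ).toLinearMap = (toConv LinearMap.id * charConv τ).ofConv := by
  ext h
  rw [(ℛ K h).convMul_apply]
  simp [rightWinding, charConv, ← (ℛ K h).eq, Algebra.smul_def, Algebra.commutes]

lemma leftWinding_toLinearMap (τ : H →ₐ[K] K) :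
    (leftWinding τ).toLinearMap = (charConv τ * toConv LinearMap.id).ofConv := by
  ext h
  rw [(ℛ K h).convMul_apply]
  simp [leftWinding, charConv, ← (ℛ K h).eq, Algebra.smul_def]

end Windings

section Hopf

variable {K H : Type*} [CommSemiring K] [Semiring H] [HopfAlgebra K H]

lemma charConv_mul_comp_antipode (τ : H →ₐ[K] K) :
    charConv τ * toConv ((charConv τ).ofConv ∘ₗ antipode K) = 1 := by
  have := algHom_comp_convMul_distrib ((Algebra.ofId K H).comp τ) (toConv LinearMap.id)
    (toConv (antipode K))
  rw [LinearMap.id_mul_antipode, LinearMap.algHom_comp_convOne] at this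
  exact WithConv.ofConv_injective this.symm

-- `h ↦ Σ h₁ τ(S h₂)` is a right inverse, since `(id * τ) * (τ ∘ S) = id` in convolution.
lemma rightWinding_surjective (τ : H →ₐ[K] K) : Function.Surjective (rightWinding τ) := by
  set T' := toConv ((charConv τ).ofConv ∘ₗ antipode K)
  have hT' : (rightWinding τ).toLinearMap ∘ₗ T'.ofConv = T'.ofConv := by ext; simp [T', charConv]
  have key : (rightWinding τ).toLinearMap ∘ₗ (toConv LinearMap.id * T').ofConv = LinearMap.id :=
    calc _ = (toConv (rightWinding τ).toLinearMap * T').ofConv := by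
          rw [algHom_comp_convMul_distrib, LinearMap.comp_id, hT']
      _ = (toConv LinearMap.id * charConv τ * T').ofConv := by rw [rightWinding_toLinearMap]
      _ = LinearMap.id := by rw [mul_assoc, charConv_mul_comp_antipode, mul_one]
  exact fun h => ⟨(toConv LinearMap.id * T').ofConv h, LinearMap.congr_fun key h⟩

theorem intertwinesWindings_iff_forall_commute {τ : H →ₐ[K] K} {w : H}
    (hw : IsGroupLikeElem K w) (hτw : IntertwinesWindings τ w) (f : H) :
    IntertwinesWindings τ f ↔ ∀ h, Commute (f * antipode K w) h := by
  rw [(rightWinding_surjective τ).forall (p := Commute (f * antipode K w))]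
  refine forall_congr' fun h => ?_
  set x := rightWinding τ h
  have hy : leftWinding τ h = antipode K w * x * w := by
    rw [mul_assoc, hτw h, ← mul_assoc, hw.antipode_mul_cancel, one_mul]
  rw [hy]
  constructor
  · intro hf
    calc f * antipode K w * x = f * antipode K w * x * (w * antipode K w) := by
          rw [hw.mul_antipode_cancel, mul_one]
      _ = x * f * antipode K w := by rw [hf]; simp only [mul_assoc]
      _ = x * (f * antipode K w) := mul_assoc ..
  · intro hc
    calc x * f = x * (f * antipode K w) * w := by
          rw [mul_assoc, mul_assoc, hw.antipode_mul_cancel, mul_one]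
      _ = f * (antipode K w * x * w) := by rw [← hc]; simp only [mul_assoc]

lemma mulRight_convMul_charConv (τ : H →ₐ[K] K) (f : H) :
    toConv (LinearMap.mulRight K f) * charConv τ =
      toConv (LinearMap.mulRight K f ∘ₗ (rightWinding τ).toLinearMap) := by
  ext h
  rw [rightWinding_toLinearMap]
  simp [(ℛ K h).convMul_apply, charConv, mul_assoc, Algebra.commutes]

lemma smulRight_convMul_id (τ : H →ₐ[K] K) (f : H) :
    toConv (τ.toLinearMap.smulRight f) * toConv LinearMap.id =
      toConv (LinearMap.mulLeft K f ∘ₗ (leftWinding τ).toLinearMap) := by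
  ext h
  rw [leftWinding_toLinearMap]
  simp [(ℛ K h).convMul_apply, charConv, Algebra.smul_def, mul_assoc, Algebra.commutes]

theorem convMul_antipode_eq_smulRight_iff (τ : H →ₐ[K] K) (f : H) :
    toConv (LinearMap.mulRight K f) * charConv τ * toConv (antipode K) =
        toConv (τ.toLinearMap.smulRight f) ↔ IntertwinesWindings τ f := by
  let U : (WithConv (H →ₗ[K] H))ˣ :=
    ⟨toConv LinearMap.id, toConv (antipode K), LinearMap.id_mul_antipode,
      LinearMap.antipode_mul_id⟩
  rw [show toConv (antipode K) = ↑U⁻¹ from rfl, Units.mul_inv_eq_iff_eq_mul,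
    show (U : WithConv (H →ₗ[K] H)) = toConv LinearMap.id from rfl, mulRight_convMul_charConv,
    smulRight_convMul_id, toConv_injective.eq_iff, LinearMap.ext_iff]
  rfl

end Hopf

section Field

variable {K V M : Type*} [Field K] [AddCommGroup V] [Module K V] [AddCommGroup M] [Module K M]

lemma isGroupLikeElem_of_comul_eq_tmul_self [Coalgebra K M] {a : M} (ha : a ≠ 0)
    (h : comul (R := K) a = a ⊗ₜ a) : IsGroupLikeElem K a := by
  have hε := congrArg (TensorProduct.lid K M) (Coalgebra.rTensor_counit_comul (R := K) a)
  rw [h, LinearMap.rTensor_tmul, TensorProduct.lid_tmul, TensorProduct.lid_tmul] at hε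
  exact ⟨smul_left_injective K ha hε, h⟩

lemma tmul_left_injective_of_ne_zero {v : V} (hv : v ≠ 0) :
    Function.Injective fun m : M => m ⊗ₜ[K] v := by
  obtain ⟨φ, hφ⟩ := Module.Projective.exists_dual_eq_one K hv
  intro x y hxy
  simpa [hφ] using congrArg (TensorProduct.rid K M ∘ LinearMap.lTensor M φ) hxy

lemma exists_forall_eq_tmul_of_finrank_eq_one (hV : Module.finrank K V = 1)
    (c : V →ₗ[K] M ⊗[K] V) : ∃ m : M, ∀ v, c v = m ⊗ₜ v := by
  obtain ⟨e⟩ := Module.nonempty_linearEquiv_of_finrank_eq_one hV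
  obtain ⟨m, hm⟩ := ((TensorProduct.rid K M).symm.trans (LinearEquiv.lTensor M e)).surjective
    (c (e 1))
  refine ⟨m, fun v => ?_⟩
  have hv : e.symm v • e 1 = v := by rw [← map_smul, smul_eq_mul, mul_one, e.apply_symm_apply]
  rw [← hv, map_smul, ← hm]
  simp [TensorProduct.tmul_smul]

lemma exists_algHom_forall_eq_smul_of_finrank_eq_one {A : Type*} [Semiring A] [Algebra K A]
    (hV : Module.finrank K V = 1) (ρ : A →ₐ[K] Module.End K V) :
    ∃ τ : A →ₐ[K] K, ∀ a v, ρ a v = τ a • v := by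
  have hbij : Function.Bijective (Algebra.ofId K (Module.End K V)) := by
    convert (LinearEquiv.smul_id_of_finrank_eq_one hV).bijective
    ext
    simp [Module.algebraMap_end_apply]
  let e := AlgEquiv.ofBijective _ hbij
  refine ⟨(e.symm : Module.End K V →ₐ[K] K).comp ρ, fun a v => ?_⟩
  have h := LinearMap.congr_fun (e.apply_symm_apply (ρ a)) v
  exact h.symm.trans (Module.algebraMap_end_apply _ _ _ _ _)

end Field

section QuasiTriangular

variable {K H : Type} [Field K] [Ring H] [HopfAlgebra K H] {R : H ⊗[K] H}

lemma isCentralGrouplike_iff {g : H} :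
    IsCentralGrouplike K H g ↔ IsGroupLikeElem K g ∧ ∀ h, Commute g h := by
  simp only [IsCentralGrouplike, isGroupLikeElem_iff, Commute, SemiconjBy]
  tauto

lemma applyLeft_r13 (τ : H →ₐ[K] K) : applyLeft τ (r13 K H R) = 1 ⊗ₜ applyLeft τ R := by
  have : (applyLeft τ).toLinearMap ∘ₗ TensorProduct.map LinearMap.id (TensorProduct.mk K H H 1) =
      TensorProduct.mk K H H 1 ∘ₗ (applyLeft (A := H) τ).toLinearMap := by
    ext x y; simp
  exact LinearMap.congr_fun this R

lemma applyLeft_r12 (τ : H →ₐ[K] K) : applyLeft τ (r12 K H R) = applyLeft τ R ⊗ₜ 1 := by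
  have : (applyLeft τ).toLinearMap ∘ₗ
        TensorProduct.map LinearMap.id ((TensorProduct.mk K H H).flip 1) =
      (TensorProduct.mk K H H).flip 1 ∘ₗ (applyLeft (A := H) τ).toLinearMap := by
    ext x y; simp [TensorProduct.smul_tmul']
  exact LinearMap.congr_fun this R

theorem IsQuasiTriangular.isGroupLikeElem_applyLeft (hR : IsQuasiTriangular K H R)
    (τ : H →ₐ[K] K) : IsGroupLikeElem K (applyLeft τ R) := by
  have := Bialgebra.nontrivial K (A := H)
  refine isGroupLikeElem_of_comul_eq_tmul_self (hR.isUnit.map (applyLeft τ)).ne_zero ?_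
  have key := congrArg (applyLeft τ) hR.comul_lTensor
  rwa [applyLeft_lTensor_comul, map_mul, applyLeft_r13, applyLeft_r12,
    Algebra.TensorProduct.tmul_mul_tmul, one_mul, mul_one] at key

theorem IsQuasiTriangular.intertwinesWindings_applyLeft (hR : IsQuasiTriangular K H R)
    (τ : H →ₐ[K] K) : IntertwinesWindings τ (applyLeft τ R) := fun h => by
  have := congrArg (applyLeft τ) (hR.intertwine h)
  rw [map_mul, map_mul] at this
  exact this.symm

theorem IsQuasiTriangular.isCentralGrouplike_mul_antipode (hR : IsQuasiTriangular K H R)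
    {τ : H →ₐ[K] K} {f : H} (hf : IsGroupLikeElem K f) (hfτ : IntertwinesWindings τ f) :
    IsCentralGrouplike K H (f * antipode K (applyLeft τ R)) :=
  have hw := hR.isGroupLikeElem_applyLeft τ
  isCentralGrouplike_iff.2 ⟨hf.mul hw.antipode,
    (intertwinesWindings_iff_forall_commute hw (hR.intertwinesWindings_applyLeft τ) f).1 hfτ⟩

theorem IsQuasiTriangular.intertwinesWindings_mul_applyLeft (hR : IsQuasiTriangular K H R)
    {g : H} (hg : IsCentralGrouplike K H g) (τ : H →ₐ[K] K) :
    IntertwinesWindings τ (g * applyLeft τ R) := by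
  have hw := hR.isGroupLikeElem_applyLeft τ
  rw [intertwinesWindings_iff_forall_commute hw (hR.intertwinesWindings_applyLeft τ), mul_assoc,
    hw.mul_antipode_cancel, mul_one]
  exact (isCentralGrouplike_iff.1 hg).2

end QuasiTriangular

section YetterDrinfeld

variable {K H : Type} [Field K] [Ring H] [HopfAlgebra K H] {V V' : Type*} [AddCommGroup V]
  [Module K V] [AddCommGroup V'] [Module K V']

-- the right-hand side of the Yetter–Drinfeld condition at `h ⊗ v`: `Σ h₁ f τ(h₂) S(h₃) ⊗ v`
lemma map_sandwich_deltaYD_tmul_tmul {τ : H →ₐ[K] K} {act : H →ₐ[K] Module.End K V}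
    (hact : ∀ h v, act h v = τ h • v) (f : H) (v : V) (h : H) :
    TensorProduct.map (sandwich K H) (TensorProduct.lift act.toLinearMap)
        (TensorProduct.tensorTensorTensorComm K (H ⊗[K] H) H H V (deltaYD K H h ⊗ₜ (f ⊗ₜ v))) =
      (toConv (LinearMap.mulRight K f) * charConv τ * toConv (antipode K)).ofConv h ⊗ₜ v := by
  have key : (TensorProduct.map (sandwich K H) (TensorProduct.lift act.toLinearMap) ∘ₗ
        (TensorProduct.tensorTensorTensorComm K (H ⊗[K] H) H H V).toLinearMap ∘ₗ
        (TensorProduct.mk K _ (H ⊗[K] V)).flip (f ⊗ₜ v)) ∘ₗ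
        ((TensorProduct.assoc K H H H).symm.toLinearMap ∘ₗ
          (LinearMap.lTensor H (TensorProduct.comm K H H).toLinearMap) ∘ₗ
          (TensorProduct.assoc K H H H).toLinearMap) =
      (TensorProduct.mk K H V).flip v ∘ₗ LinearMap.mul' K H ∘ₗ
        TensorProduct.map (LinearMap.mul' K H ∘ₗ
          TensorProduct.map (LinearMap.mulRight K f) (charConv τ).ofConv) (antipode K) := by
    ext x y z
    simp only [sandwich, charConv, coe_comp, LinearEquiv.coe_coe, Function.comp_apply,
      assoc_tmul, lTensor_tmul, comm_tmul, assoc_symm_tmul, flip_apply, mk_apply,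
      tensorTensorTensorComm_tmul, map_tmul, mul'_apply, lift.tmul, AlgHom.toLinearMap_apply,
      hact, tmul_smul, AlgHom.comp_toLinearMap, mulRight_apply,
      AlgHom.coe_toLinearMap, Algebra.ofId_apply, AlgebraTensorModule.curry_apply, curry_apply,
      LinearMap.coe_restrictScalars]
    rw [← Algebra.commutes, ← Algebra.smul_def, smul_mul_assoc, mul_assoc, smul_tmul']
  convert LinearMap.congr_fun key (LinearMap.rTensor H comul (comul h)) using 1
  · rfl
  · rw [LinearMap.comp_apply, LinearMap.comp_apply, ← LinearMap.comp_apply (TensorProduct.map _ _),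
      map_comp_rTensor]
    rfl

namespace YDStr

structure IsScalar (s : YDStr K H V) (f : H) (τ : H →ₐ[K] K) : Prop where
  coact_apply : ∀ v, s.coact v = f ⊗ₜ v
  act_apply : ∀ h v, s.act h v = τ h • v

variable {s : YDStr K H V} {f : H} {τ : H →ₐ[K] K}

theorem exists_isScalar (s : YDStr K H V) (hV : Module.finrank K V = 1) :
    ∃ f τ, s.IsScalar f τ := by
  obtain ⟨f, hf⟩ := exists_forall_eq_tmul_of_finrank_eq_one hV s.coact
  obtain ⟨τ, hτ⟩ := exists_algHom_forall_eq_smul_of_finrank_eq_one hV s.act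
  exact ⟨f, τ, hf, hτ⟩

theorem IsScalar.isGroupLikeElem [Nontrivial V] (hs : s.IsScalar f τ) : IsGroupLikeElem K f := by
  obtain ⟨v, hv⟩ := exists_ne (0 : V)
  have hε := s.counit_coact v
  have hΔ := LinearMap.congr_fun s.coassoc v
  simp only [LinearMap.comp_apply, LinearEquiv.coe_coe, hs.coact_apply, LinearMap.rTensor_tmul,
    LinearMap.lTensor_tmul, TensorProduct.assoc_symm_tmul, TensorProduct.lid_tmul] at hε hΔ
  exact ⟨smul_left_injective K hv (hε.trans (one_smul K v).symm),
    tmul_left_injective_of_ne_zero hv hΔ⟩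

theorem IsScalar.intertwinesWindings [Nontrivial V] (hs : s.IsScalar f τ) :
    IntertwinesWindings τ f := by
  obtain ⟨v, hv⟩ := exists_ne (0 : V)
  rw [← convMul_antipode_eq_smulRight_iff]
  ext h
  have hyd := LinearMap.congr_fun s.yd (h ⊗ₜ v)
  simp only [LinearMap.comp_apply, LinearEquiv.coe_coe, TensorProduct.map_tmul,
    TensorProduct.lift.tmul, AlgHom.toLinearMap_apply, hs.act_apply, hs.coact_apply,
    map_sandwich_deltaYD_tmul_tmul hs.act_apply] at hyd
  exact tmul_left_injective_of_ne_zero (K := K) hv (hyd.symm.trans (smul_tmul _ _ _).symm)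

theorem IsScalar.rhoR_apply (hs : s.IsScalar f τ) (R : H ⊗[K] H) (v : V) :
    rhoR K H R s v = (f * antipode K (applyLeft τ R)) ⊗ₜ v := by
  simp only [rhoR, LinearMap.comp_apply, hs.coact_apply]
  induction R using TensorProduct.induction_on with
  | zero => simp
  | tmul a b => simp [hs.act_apply, TensorProduct.smul_tmul]
  | add a b ha hb => simp only [map_add, LinearMap.add_apply, ha, hb, mul_add, add_tmul]

theorem IsScalar.rhoR_eq_tmul_iff [Nontrivial V] (hs : s.IsScalar f τ) (R : H ⊗[K] H) (g : H) :
    (∀ v, rhoR K H R s v = g ⊗ₜ v) ↔ g = f * antipode K (applyLeft τ R) := by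
  refine ⟨fun hg => ?_, fun hg v => hg ▸ hs.rhoR_apply R v⟩
  obtain ⟨v, hv⟩ := exists_ne (0 : V)
  exact tmul_left_injective_of_ne_zero hv ((hg v).symm.trans (hs.rhoR_apply R v))

variable (V) in
def ofScalar (hf : IsGroupLikeElem K f) (hfτ : IntertwinesWindings τ f) : YDStr K H V where
  act := (Algebra.ofId K (Module.End K V)).comp τ
  coact := TensorProduct.mk K H V f
  counit_coact v := by simp [hf.counit_eq_one]
  coassoc := by ext v; simp [hf.comul_eq_tmul_self]
  yd := by
    refine TensorProduct.ext' fun h v => ?_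
    simp only [LinearMap.comp_apply, LinearEquiv.coe_coe, TensorProduct.map_tmul,
      TensorProduct.lift.tmul, TensorProduct.mk_apply]
    rw [map_sandwich_deltaYD_tmul_tmul (fun _ _ => rfl),
      (convMul_antipode_eq_smulRight_iff τ f).2 hfτ]
    simp [TensorProduct.smul_tmul]

theorem isScalar_ofScalar (hf : IsGroupLikeElem K f) (hfτ : IntertwinesWindings τ f) :
    (ofScalar V hf hfτ).IsScalar f τ :=
  ⟨fun _ => rfl, fun _ _ => rfl⟩

theorem IsScalar.ydIsomorphic_iff {s' : YDStr K H V'} {f' : H} {τ' : H →ₐ[K] K}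
    (hs : s.IsScalar f τ) (hs' : s'.IsScalar f' τ') (hV : Module.finrank K V = 1)
    (hV' : Module.finrank K V' = 1) : YDIsomorphic K H s s' ↔ f = f' ∧ τ = τ' := by
  constructor
  · rintro ⟨e, hact, hcoact⟩
    have := Module.nontrivial_of_finrank_eq_succ hV
    obtain ⟨v, hv⟩ := exists_ne (0 : V)
    have hev : e v ≠ 0 := e.map_ne_zero_iff.2 hv
    have hf := LinearMap.congr_fun hcoact v
    simp only [LinearMap.comp_apply, hs.coact_apply, hs'.coact_apply, LinearMap.lTensor_tmul,
      LinearEquiv.coe_toLinearMap] at hf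
    refine ⟨tmul_left_injective_of_ne_zero hev hf, AlgHom.ext fun h => ?_⟩
    have hτ := hact h v
    rw [hs.act_apply, hs'.act_apply, map_smul] at hτ
    exact smul_left_injective K hev hτ
  · rintro ⟨rfl, rfl⟩
    obtain ⟨e⟩ := Module.nonempty_linearEquiv_of_finrank_eq_one hV
    obtain ⟨e'⟩ := Module.nonempty_linearEquiv_of_finrank_eq_one hV'
    refine ⟨e.symm.trans e', fun h v => ?_, LinearMap.ext fun v => ?_⟩
    · rw [hs.act_apply, hs'.act_apply, map_smul]
    · simp [hs.coact_apply, hs'.coact_apply]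

end YDStr

end YetterDrinfeld

end

/-- **Statement 17.** For a quasi-triangular Hopf algebra `(H,R)` the one-dimensional
Yetter–Drinfeld modules are classified by pairs consisting of a central grouplike
element of `H` and a one-dimensional `H`-module (an algebra map `H → k`):
every one-dimensional `V ∈ ᴴᴴYD` has `ρ_R(v) = g ⊗ v` for a unique central grouplike `g`
and action given by a unique algebra map `H → k`; every such pair arises this way; and
two one-dimensional Yetter–Drinfeld modules are isomorphic iff their pairs coincide. -/
theorem one_dimensional_yd_classification
    (R : H ⊗[K] H) (hR : IsQuasiTriangular K H R) :
    (∀ (V : Type) [AddCommGroup V] [Module K V] (s : YDStr K H V),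
      Module.finrank K V = 1 →
        ∃! p : H × (H →ₐ[K] K), IsCentralGrouplike K H p.1 ∧
          (∀ v : V, rhoR K H R s v = p.1 ⊗ₜ v) ∧
          (∀ (h : H) (v : V), s.act h v = p.2 h • v)) ∧
    (∀ g : H, IsCentralGrouplike K H g → ∀ τ : H →ₐ[K] K,
        ∃ s : YDStr K H K,
          (∀ c : K, rhoR K H R s c = g ⊗ₜ c) ∧
          (∀ (h : H) (c : K), s.act h c = τ h * c)) ∧
    (∀ (V V' : Type) [AddCommGroup V] [Module K V] [AddCommGroup V'] [Module K V']
        (s : YDStr K H V) (s' : YDStr K H V'),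
        Module.finrank K V = 1 → Module.finrank K V' = 1 →
        ∀ (g g' : H) (τ τ' : H →ₐ[K] K),
          IsCentralGrouplike K H g → IsCentralGrouplike K H g' →
          (∀ v : V, rhoR K H R s v = g ⊗ₜ v) →
          (∀ (h : H) (v : V), s.act h v = τ h • v) →
          (∀ v : V', rhoR K H R s' v = g' ⊗ₜ v) →
          (∀ (h : H) (v : V'), s'.act h v = τ' h • v) →
          (YDIsomorphic K H s s' ↔ (g = g' ∧ τ = τ'))) := by
  refine ⟨fun V _ _ s hV => ?_, fun g hg τ => ?_, ?_⟩
  · have := Module.nontrivial_of_finrank_eq_succ hV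
    obtain ⟨v, hv⟩ := exists_ne (0 : V)
    obtain ⟨f, τ, hs⟩ := s.exists_isScalar hV
    refine ⟨(f * antipode K (applyLeft τ R), τ), ⟨hR.isCentralGrouplike_mul_antipode
      hs.isGroupLikeElem hs.intertwinesWindings, (hs.rhoR_eq_tmul_iff R _).2 rfl, hs.act_apply⟩, ?_⟩
    rintro ⟨g, τ'⟩ ⟨-, hρ, hact⟩
    exact Prod.ext ((hs.rhoR_eq_tmul_iff R g).1 hρ)
      (AlgHom.ext fun h => smul_left_injective K hv ((hact h v).symm.trans (hs.act_apply h v)))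
  · have hw := hR.isGroupLikeElem_applyLeft τ
    have hs := YDStr.isScalar_ofScalar (V := K) ((isCentralGrouplike_iff.1 hg).1.mul hw)
      (hR.intertwinesWindings_mul_applyLeft hg τ)
    refine ⟨_, (hs.rhoR_eq_tmul_iff R g).2 ?_, hs.act_apply⟩
    rw [mul_assoc, hw.mul_antipode_cancel, mul_one]
  · intro V V' _ _ _ _ s s' hV hV' g g' τ τ' _ _ hρ hact hρ' hact'
    have := Module.nontrivial_of_finrank_eq_succ hV
    have := Module.nontrivial_of_finrank_eq_succ hV'
    obtain ⟨f, hf⟩ := exists_forall_eq_tmul_of_finrank_eq_one hV s.coact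
    obtain ⟨f', hf'⟩ := exists_forall_eq_tmul_of_finrank_eq_one hV' s'.coact
    have hs : s.IsScalar f τ := ⟨hf, hact⟩
    have hs' : s'.IsScalar f' τ' := ⟨hf', hact'⟩
    rw [hs.ydIsomorphic_iff hs' hV hV', (hs.rhoR_eq_tmul_iff R g).1 hρ,
      (hs'.rhoR_eq_tmul_iff R g').1 hρ']
    refine ⟨fun ⟨hff, hττ⟩ => ⟨by rw [hff, hττ], hττ⟩, fun ⟨hgg, hττ⟩ => ⟨?_, hττ⟩⟩
    subst hττ
    exact (hR.isGroupLikeElem_applyLeft τ).antipode.isUnit.mul_right_cancel hgg
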